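/- Let G=(V,E) be a correlation clustering instance and β,λ∈(0,1) with 8β+λ ≤ 3/8. Let F be the partition of V into connected components of G̃=(V,E_G̃), and let G_2 be the instance obtained from G by turning into a neutral pair every +edge uv∈E whose endpoints lie in different parts of F (neutral pairs incur no disagreement under any clustering; the −edges of G_2 are the −edges of G). Let 𝒞* be a clustering minimizing cost^k_{·}(G_2) over all clusterings of V. Then the pre-clustering F satisfies cost^k_F(G_2) ≤ 7·cost^k_{𝒞*}(G_2). -/

import Mathlib

open Finset

attribute [local instance] Classical.propDecidable

noncomputable section

variable {V : Type*}

/-- The neighborhood of `u` in the graph of `+`edges `E` (contains `u` itself,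
since `E` contains all self-loops). -/
def Nbr [Fintype V] (E : V → V → Prop) (u : V) : Finset V :=
  Finset.univ.filter (fun v => E u v)

/-- The degree `d(u) = |N(u)|`. -/
def deg [Fintype V] (E : V → V → Prop) (u : V) : ℕ := (Nbr E u).card

/-- `M_{uv} = max (d(u), d(v))`. -/
def Mdeg [Fintype V] (E : V → V → Prop) (u v : V) : ℕ := max (deg E u) (deg E v)

/-- The pruned edge set `E_H = {uv ∈ E : |N(u) Δ N(v)| ≤ β · M_{uv}}`. -/
def EH [Fintype V] (β : ℝ) (E : V → V → Prop) (u v : V) : Prop :=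
  E u v ∧ ((symmDiff (Nbr E u) (Nbr E v)).card : ℝ) ≤ β * (Mdeg E u v : ℝ)

/-- The neighborhood of `u` in the pruned graph `H`. -/
def NH [Fintype V] (β : ℝ) (E : V → V → Prop) (u : V) : Finset V :=
  Finset.univ.filter (fun v => EH β E u v)

/-- The fractional solution: `x_{uu} = 0` and
`x_{uv} = 1 − |N_H(u) ∩ N_H(v)| / M_{uv}` for `u ≠ v`. -/
def xval [Fintype V] (β : ℝ) (E : V → V → Prop) (u v : V) : ℝ :=
  if u = v then 0 else 1 - ((NH β E u ∩ NH β E v).card : ℝ) / (Mdeg E u v : ℝ)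

/-- `cost_𝒞(u)`: the number of pairs incident to `u` in disagreement with respect
to the clustering `C` (given as a labelling function). -/
def costC [Fintype V] {α : Type*} (E : V → V → Prop) (C : V → α) (u : V) : ℕ :=
  (Finset.univ.filter
    (fun v => (E u v ∧ C u ≠ C v) ∨ (¬ E u v ∧ v ≠ u ∧ C u = C v))).card

/-- The top-`k` norm `cost^k_𝒞` of the disagreement vector of the clustering `C`:
the maximum of `∑_{u ∈ T} cost_𝒞(u)` over subsets `T ⊆ V` of size `k`. -/
def costTopK [Fintype V] {α : Type*} (E : V → V → Prop) (C : V → α) (k : ℕ) : ℕ :=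
  (Finset.powersetCard k (Finset.univ : Finset V)).sup (fun T => ∑ u ∈ T, costC E C u)

/-- `d_H(u)`: the degree of `u` in the pruned graph `H`. -/
def dH [Fintype V] (β : ℝ) (E : V → V → Prop) (u : V) : ℕ := (NH β E u).card

/-- A vertex is heavy if it keeps at least a `(1−λ)` fraction of its neighbours in `H`
(i.e. it is not light: `d_H(v) ≥ (1−λ)·d(v)`). -/
def Heavy [Fintype V] (β lam : ℝ) (E : V → V → Prop) (v : V) : Prop :=
  (1 - lam) * (deg E v : ℝ) ≤ (dH β E v : ℝ)

/-- The edge set `E_G̃ = {uv ∈ E_H : u or v is heavy}`. -/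
def EGt [Fintype V] (β lam : ℝ) (E : V → V → Prop) (u v : V) : Prop :=
  EH β E u v ∧ (Heavy β lam E u ∨ Heavy β lam E v)

/-- The graph `G̃ = (V, E_G̃)`. -/
def Gtilde [Fintype V] (β lam : ℝ) (E : V → V → Prop) : SimpleGraph V :=
  SimpleGraph.fromRel (fun u v => EGt β lam E u v)

/-- The pre-clustering `F`: the partition of `V` into connected components of `G̃`,
given by the map sending each vertex to its connected component. -/
def preCluster [Fintype V] (β lam : ℝ) (E : V → V → Prop) :
    V → (Gtilde β lam E).ConnectedComponent :=
  fun v => (Gtilde β lam E).connectedComponentMk v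

/-- The disagreement of `u` under clustering `D` in the modified instance `G₂`, where
every `+`edge whose endpoints lie in different parts of `F` has been made neutral:
`cost_D(G₂,u) = |{v : uv∈E, F(u)=F(v), D(u)≠D(v)}| + |{v≠u : uv∉E, D(u)=D(v)}|`. -/
def costC2 [Fintype V] {γ α : Type*} (E : V → V → Prop) (F : V → γ) (D : V → α)
    (u : V) : ℕ :=
  (Finset.univ.filter (fun v => E u v ∧ F u = F v ∧ D u ≠ D v)).card
    + (Finset.univ.filter (fun v => v ≠ u ∧ ¬ E u v ∧ D u = D v)).card

/-- The top-`k` norm of the disagreement vector of `D` in the modified instance `G₂`. -/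
def costTopK2 [Fintype V] {γ α : Type*} (E : V → V → Prop) (F : V → γ) (D : V → α)
    (k : ℕ) : ℕ :=
  (Finset.powersetCard k (Finset.univ : Finset V)).sup (fun T => ∑ u ∈ T, costC2 E F D u)

/-!
Write `A(u)` for the non-neighbours of `u` inside its part of `F`; this is exactly the cost of
`u` under `F` itself. Heavy vertices of one component of `G̃` have a common `H`-neighbour: along a
path of `G̃` every edge has a heavy endpoint, and two heavy vertices whose neighbourhoods are both
close to that of a third vertex keep too much of their neighbourhoods in `H` for their
`H`-neighbourhoods to be disjoint.
Hence every part is dense: double counting the edges between `A(u)` and the `H`-neighbourhood `S`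
of a heavy `H`-neighbour of `u` gives `5 |A(u)| ≤ |S| ≤ |part|`.

For a clustering `D`, a vertex that pays less under `D` than under `F` has a strict majority of
its part in its own `D`-cluster, so these vertices share one majority cluster `C`, and each vertex
of the part outside `C` pays under `D` more than `3/10` of the part, i.e. more than `3/2` times
the cost of any of them under `F`. Charging them to these witnesses (and, once witnesses run out,
to themselves and their non-edges into the witnesses) bounds `cost^k_F` by `7/3` times `cost^k_D`.
-/

open scoped symmDiff

namespace Finset

variable {ι : Type*}

theorem sum_le_sum_of_card_le {s t : Finset ι} {f g : ι → ℕ} (hst : #s ≤ #t)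
    (h : ∀ i ∈ s, ∀ j ∈ t, f i ≤ g j) : ∑ i ∈ s, f i ≤ ∑ j ∈ t, g j := by
  rcases s.eq_empty_or_nonempty with rfl | hs
  · simp
  obtain ⟨i₀, hi₀, hmax⟩ := exists_max_image s f hs
  calc ∑ i ∈ s, f i ≤ #s • f i₀ := sum_le_card_nsmul s f _ hmax
    _ ≤ #t • f i₀ := Nat.mul_le_mul_right _ hst
    _ ≤ ∑ j ∈ t, g j := card_nsmul_le_sum t g _ (h i₀ hi₀)

variable [DecidableEq ι]

theorem card_symmDiff_le_add (s t u : Finset ι) : #(s ∆ u) ≤ #(s ∆ t) + #(t ∆ u) :=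
  (card_le_card (symmDiff_triangle s t u)).trans (card_union_le _ _)

theorem card_le_card_add_card_symmDiff (s t : Finset ι) : #s ≤ #t + #(s ∆ t) :=
  (card_le_card fun x hx => by by_cases x ∈ t <;> simp_all [mem_symmDiff]).trans
    (card_union_le t (s ∆ t))

theorem card_add_card_add_card_symmDiff (s t : Finset ι) :
    #s + #t + #(s ∆ t) = 2 * #(s ∪ t) := by
  have hsub : #(s ∆ t) = #(s ∪ t) - #(s ∩ t) := by
    rw [symmDiff_eq_sup_sdiff_inf, sup_eq_union, inf_eq_inter,
      card_sdiff_of_subset (inter_subset_left.trans subset_union_left)]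
  have := card_union_add_card_inter s t
  have := card_le_card (show s ∩ t ⊆ s ∪ t from inter_subset_left.trans subset_union_left)
  omega

theorem card_le_card_inter_add_card_symmDiff {S s : Finset ι} (hS : S ⊆ s) (u : Finset ι) :
    #S ≤ #(S ∩ u) + #(s ∆ u) := by
  rw [← card_inter_add_card_sdiff S u]
  gcongr
  exact fun x hx => mem_symmDiff.2 (Or.inl ⟨hS (mem_sdiff.1 hx).1, (mem_sdiff.1 hx).2⟩)

theorem card_inter_le_card_symmDiff {A s : Finset ι} (hAs : Disjoint A s) (t : Finset ι) :
    #(A ∩ t) ≤ #(t ∆ s) :=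
  card_le_card fun _ hx => mem_symmDiff.2
    (Or.inl ⟨(mem_inter.1 hx).2, disjoint_left.1 hAs (mem_inter.1 hx).1⟩)

end Finset

section Charging

variable {ι : Type*} [DecidableEq ι]

theorem exists_charging {B R : Finset ι} (hBR : Disjoint B R) (a c e : ι → ℕ)
    (hcross : ∀ u ∈ B, ∀ w ∈ R, 3 * a u ≤ 2 * c w) (hR : ∀ w ∈ R, 3 * a w ≤ 2 * c w)
    (hB : ∀ u ∈ B, a u ≤ c u + e u) (he : ∑ u ∈ B, e u ≤ ∑ w ∈ R, a w) :
    ∃ U ⊆ B ∪ R, #U ≤ #B ∧ 3 * ∑ u ∈ B, a u ≤ 4 * ∑ u ∈ U, c u := by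
  rcases le_or_gt #B #R with hle | hlt
  · obtain ⟨W, hWR, hW⟩ := exists_subset_card_eq hle
    refine ⟨W, hWR.trans subset_union_right, hW.le, ?_⟩
    have : ∑ u ∈ B, 3 * a u ≤ ∑ w ∈ W, 2 * c w :=
      sum_le_sum_of_card_le hW.ge fun u hu w hw => hcross u hu w (hWR hw)
    rw [← mul_sum, ← mul_sum] at this
    omega
  · -- all of `R` pays for `#R` vertices of `B`; the others `B₂` pay for themselves up to `e`
    obtain ⟨B₂, hB₂B, hB₂⟩ := exists_subset_card_eq (show #B - #R ≤ #B by omega)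
    refine ⟨B₂ ∪ R, union_subset_union hB₂B subset_rfl,
      (card_union_le _ _).trans (by omega), ?_⟩
    have hdrop : ∑ u ∈ B \ B₂, 3 * a u ≤ ∑ w ∈ R, 2 * c w :=
      sum_le_sum_of_card_le (by rw [card_sdiff_of_subset hB₂B]; omega)
        fun u hu w hw => hcross u (mem_sdiff.1 hu).1 w hw
    have hkeep : ∑ u ∈ B₂, a u ≤ ∑ u ∈ B₂, c u + ∑ w ∈ R, a w :=
      calc ∑ u ∈ B₂, a u ≤ ∑ u ∈ B₂, (c u + e u) :=
            sum_le_sum fun u hu => hB u (hB₂B hu)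
        _ = ∑ u ∈ B₂, c u + ∑ u ∈ B₂, e u := sum_add_distrib
        _ ≤ ∑ u ∈ B₂, c u + ∑ w ∈ R, a w := by
          gcongr; exact (sum_le_sum_of_subset hB₂B).trans he
    have hRsum : ∑ w ∈ R, 3 * a w ≤ ∑ w ∈ R, 2 * c w := sum_le_sum hR
    rw [← sum_sdiff hB₂B, sum_union (disjoint_of_subset_left hB₂B hBR)]
    rw [← mul_sum, ← mul_sum] at hdrop hRsum
    omega

variable {γ : Type*} [DecidableEq γ]

theorem exists_sum_le_of_forall_fiber (p : ι → γ) (B : Finset ι) (f g : ι → ℕ)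
    (h : ∀ c, ∃ U : Finset ι, (∀ v ∈ U, p v = c) ∧ #U ≤ #{u ∈ B | p u = c} ∧
      ∑ u ∈ B with p u = c, f u ≤ ∑ v ∈ U, g v) :
    ∃ U : Finset ι, #U ≤ #B ∧ ∑ u ∈ B, f u ≤ ∑ v ∈ U, g v := by
  choose U hUp hUcard hUsum using h
  have hmaps : ∀ u ∈ B, p u ∈ B.image p := fun u hu => mem_image_of_mem p hu
  have hdisj : ((B.image p : Finset γ) : Set γ).PairwiseDisjoint U := fun c _ c' _ hcc' =>
    disjoint_left.2 fun v hv hv' => hcc' ((hUp c v hv).symm.trans (hUp c' v hv'))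
  refine ⟨(B.image p).biUnion U, ?_, ?_⟩
  · calc #((B.image p).biUnion U) ≤ ∑ c ∈ B.image p, #(U c) := card_biUnion_le
      _ ≤ ∑ c ∈ B.image p, #{u ∈ B | p u = c} := sum_le_sum fun c _ => hUcard c
      _ = #B := (card_eq_sum_card_fiberwise hmaps).symm
  · rw [sum_biUnion hdisj, ← sum_fiberwise_of_maps_to hmaps]
    exact sum_le_sum fun c _ => hUsum c

end Charging

section TopSum

variable [Fintype V]

def topSum (k : ℕ) (f : V → ℕ) : ℕ :=
  (powersetCard k (univ : Finset V)).sup fun T => ∑ u ∈ T, f u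

theorem sum_le_topSum {k : ℕ} (hk : k ≤ Fintype.card V) (f : V → ℕ) {U : Finset V}
    (hU : #U ≤ k) : ∑ u ∈ U, f u ≤ topSum k f := by
  obtain ⟨T, hUT, -, hT⟩ := exists_subsuperset_card_eq (subset_univ U) hU (by simpa using hk)
  exact (sum_le_sum_of_subset hUT).trans
    (le_sup (f := fun T => ∑ u ∈ T, f u) (mem_powersetCard.2 ⟨subset_univ T, hT⟩))

theorem mul_topSum_le_mul_topSum {a b k : ℕ} {f g : V → ℕ}
    (h : ∀ T : Finset V, #T = k → ∃ U : Finset V, #U ≤ k ∧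
      a * ∑ u ∈ T, f u ≤ b * ∑ u ∈ U, g u) :
    a * topSum k f ≤ b * topSum k g := by
  rcases (powersetCard k (univ : Finset V)).eq_empty_or_nonempty with hempty | hne
  · simp [topSum, hempty]
  obtain ⟨T, hT, hTsup⟩ := exists_mem_eq_sup _ hne fun T => ∑ u ∈ T, f u
  obtain ⟨hTuniv, hTk⟩ := mem_powersetCard.1 hT
  obtain ⟨U, hUk, hTU⟩ := h T hTk
  rw [topSum, hTsup]
  exact hTU.trans (Nat.mul_le_mul_left b
    (sum_le_topSum (hTk ▸ card_le_univ T) g hUk))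

end TopSum

section Partitions

variable [Fintype V] {γ α : Type*} {E : V → V → Prop} {F : V → γ} {D : V → α}
  {u v w : V}

def partOf (F : V → γ) (u : V) : Finset V := univ.filter fun v => F v = F u

theorem mem_partOf : v ∈ partOf F u ↔ F v = F u := by simp [partOf]

theorem mem_Nbr : v ∈ Nbr E u ↔ E u v := by simp [Nbr]

theorem costC2_self (hrefl : ∀ u, E u u) (u : V) :
    costC2 E F F u = #(partOf F u \ Nbr E u) := by
  rw [costC2, filter_false_of_mem fun v _ h => h.2.2 h.2.1, card_empty, zero_add]
  congr 1
  ext v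
  simp only [mem_filter, mem_univ, true_and, mem_sdiff, mem_partOf, mem_Nbr]
  exact ⟨fun ⟨_, hE, hF⟩ => ⟨hF.symm, hE⟩,
    fun ⟨hF, hE⟩ => ⟨fun h => hE (h ▸ hrefl u), hE, hF.symm⟩⟩

theorem card_partOf_le (u : V) :
    #(partOf F u) ≤ #(partOf F u \ Nbr E u) + costC2 E F D u + #(partOf F u ∩ partOf D u) := by
  have hsub : partOf F u ⊆ (partOf F u \ Nbr E u) ∪
      univ.filter (fun v => E u v ∧ F u = F v ∧ D u ≠ D v) ∪ (partOf F u ∩ partOf D u) := by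
    intro v hv
    have hF := mem_partOf.1 hv
    by_cases hE : E u v <;> by_cases hD : D v = D u <;>
      simp_all [mem_partOf, mem_Nbr, eq_comm]
  have hcost : #(univ.filter fun v => E u v ∧ F u = F v ∧ D u ≠ D v) ≤ costC2 E F D u :=
    Nat.le_add_right _ _
  have := (card_le_card hsub).trans
    ((card_union_le _ _).trans (Nat.add_le_add_right (card_union_le _ _) _))
  omega

theorem card_sdiff_Nbr_le_costC2_add (hrefl : ∀ u, E u u) (u : V) :
    #(partOf F u \ Nbr E u) ≤ costC2 E F D u + #((partOf F u \ Nbr E u) \ partOf D u) := by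
  rw [← card_inter_add_card_sdiff _ (partOf D u)]
  refine Nat.add_le_add_right ((card_le_card fun v hv => ?_).trans (Nat.le_add_left _ _)) _
  obtain ⟨hvA, hvD⟩ := mem_inter.1 hv
  have hE : ¬E u v := fun h => (mem_sdiff.1 hvA).2 (mem_Nbr.2 h)
  exact mem_filter.2 ⟨mem_univ v, fun h => hE (h ▸ hrefl u), hE, (mem_partOf.1 hvD).symm⟩

theorem card_sdiff_Nbr_le_costC2_add_card_inter (hrefl : ∀ u, E u u) {u₀ : V}
    (hF : F u = F u₀) (hD : D u = D u₀) :
    #(partOf F u \ Nbr E u) ≤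
      costC2 E F D u + #((partOf F u \ Nbr E u) ∩ (partOf F u₀ \ partOf D u₀)) := by
  have hsub : (partOf F u \ Nbr E u) \ partOf D u ⊆
      (partOf F u \ Nbr E u) ∩ (partOf F u₀ \ partOf D u₀) := fun v hv => by
    obtain ⟨hvA, hvD⟩ := mem_sdiff.1 hv
    simp only [mem_inter, mem_sdiff, mem_partOf] at hvA hvD ⊢
    exact ⟨hvA, hvA.1.trans hF, hD ▸ hvD⟩
  exact (card_sdiff_Nbr_le_costC2_add hrefl u).trans (Nat.add_le_add_left (card_le_card hsub) _)

theorem mem_sdiff_Nbr_comm (hsymm : ∀ u v, E u v → E v u) :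
    w ∈ partOf F u \ Nbr E u ↔ u ∈ partOf F w \ Nbr E w := by
  simp only [mem_sdiff, mem_partOf, mem_Nbr]
  exact ⟨fun ⟨hF, hE⟩ => ⟨hF.symm, fun h => hE (hsymm _ _ h)⟩,
    fun ⟨hF, hE⟩ => ⟨hF.symm, fun h => hE (hsymm _ _ h)⟩⟩

theorem sum_card_sdiff_Nbr_inter_le (hsymm : ∀ u v, E u v → E v u) (B R : Finset V) :
    ∑ u ∈ B, #((partOf F u \ Nbr E u) ∩ R) ≤ ∑ w ∈ R, #(partOf F w \ Nbr E w) := by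
  set r : V → V → Prop := fun u w => w ∈ partOf F u \ Nbr E u
  calc ∑ u ∈ B, #((partOf F u \ Nbr E u) ∩ R) = ∑ u ∈ B, #(R.bipartiteAbove r u) :=
        sum_congr rfl fun u _ => by congr 1; ext; simp [r, bipartiteAbove, and_comm]
    _ = ∑ w ∈ R, #(B.bipartiteBelow r w) := sum_card_bipartiteAbove_eq_sum_card_bipartiteBelow r
    _ ≤ ∑ w ∈ R, #(partOf F w \ Nbr E w) := sum_le_sum fun w _ => card_le_card fun u hu =>
        (mem_sdiff_Nbr_comm hsymm).1 ((mem_bipartiteBelow r).1 hu).2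

theorem card_lt_two_mul_card_inter_of_costC2_lt
    (hdens : 5 * #(partOf F u \ Nbr E u) ≤ #(partOf F u))
    (hbad : costC2 E F D u < #(partOf F u \ Nbr E u)) :
    #(partOf F u) < 2 * #(partOf F u ∩ partOf D u) := by
  have := card_partOf_le (E := E) (F := F) (D := D) u
  omega

theorem eq_of_card_lt_two_mul_card_inter {K : Finset V} {u₀ : V}
    (hu : #K < 2 * #(K ∩ partOf D u)) (hu₀ : #K < 2 * #(K ∩ partOf D u₀)) :
    D u = D u₀ := by
  obtain ⟨z, hz⟩ := inter_nonempty_of_card_lt_card_add_card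
    (inter_subset_left (s₁ := K) (s₂ := partOf D u))
    (inter_subset_left (s₁ := K) (s₂ := partOf D u₀)) (by omega)
  simp only [mem_inter, mem_partOf] at hz
  exact hz.1.2.symm.trans hz.2.2

theorem three_mul_card_lt_ten_mul_costC2 {u₀ : V} (hw : F w = F u₀) (hD : D w ≠ D u₀)
    (hmaj : #(partOf F u₀) < 2 * #(partOf F u₀ ∩ partOf D u₀))
    (hdens : 5 * #(partOf F w \ Nbr E w) ≤ #(partOf F w)) :
    3 * #(partOf F u₀) < 10 * costC2 E F D w := by
  set K := partOf F u₀
  have hK : partOf F w = K := by simp only [K, partOf, hw]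
  have hdisj : Disjoint (K ∩ partOf D w) (K ∩ partOf D u₀) :=
    disjoint_left.2 fun z hzw hzu₀ =>
      hD ((mem_partOf.1 (mem_inter.1 hzw).2).symm.trans (mem_partOf.1 (mem_inter.1 hzu₀).2))
  have hsplit : #(K ∩ partOf D w) + #(K ∩ partOf D u₀) ≤ #K := by
    rw [← card_union_of_disjoint hdisj]
    exact card_le_card (union_subset inter_subset_left inter_subset_left)
  have := card_partOf_le (E := E) (F := F) (D := D) w
  rw [hK] at this hdens
  omega

theorem exists_charging_of_costC2_lt (hsymm : ∀ u v, E u v → E v u) (hrefl : ∀ u, E u u)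
    (hdens : ∀ u, 5 * #(partOf F u \ Nbr E u) ≤ #(partOf F u)) (c : γ) (B : Finset V)
    (hB : ∀ u ∈ B, F u = c ∧ costC2 E F D u < #(partOf F u \ Nbr E u)) :
    ∃ U : Finset V, (∀ v ∈ U, F v = c) ∧ #U ≤ #B ∧
      3 * ∑ u ∈ B, #(partOf F u \ Nbr E u) ≤ 4 * ∑ v ∈ U, costC2 E F D v := by
  rcases B.eq_empty_or_nonempty with rfl | ⟨u₀, hu₀⟩
  · exact ⟨∅, by simp, by simp, by simp⟩
  set K := partOf F u₀
  have hK : ∀ {v}, F v = c → partOf F v = K := fun hv => by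
    simp only [K, partOf, hv, (hB u₀ hu₀).1]
  have hmaj : ∀ u ∈ B, #K < 2 * #(K ∩ partOf D u) := fun u hu => by
    rw [← hK (hB u hu).1]
    exact card_lt_two_mul_card_inter_of_costC2_lt (hdens u) (hB u hu).2
  have hsame : ∀ u ∈ B, D u = D u₀ := fun u hu =>
    eq_of_card_lt_two_mul_card_inter (hmaj u hu) (hmaj u₀ hu₀)
  set R := K \ partOf D u₀
  have hRK : ∀ {w}, w ∈ R → F w = c := fun hw =>
    (mem_partOf.1 (mem_sdiff.1 hw).1).trans (hB u₀ hu₀).1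
  have hR : ∀ w ∈ R, 3 * #K < 10 * costC2 E F D w := fun w hw =>
    three_mul_card_lt_ten_mul_costC2 (mem_partOf.1 (mem_sdiff.1 hw).1)
      (fun h => (mem_sdiff.1 hw).2 (mem_partOf.2 h)) (hmaj u₀ hu₀) (hdens w)
  have hdensK : ∀ {u}, F u = c → 5 * #(partOf F u \ Nbr E u) ≤ #K := fun hu =>
    hK hu ▸ hdens _
  have hBR : Disjoint B R := disjoint_left.2 fun u hu huR =>
    (mem_sdiff.1 huR).2 (mem_partOf.2 (hsame u hu))
  obtain ⟨U, hU, hUB, hsum⟩ := exists_charging hBR (fun u => #(partOf F u \ Nbr E u))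
    (costC2 E F D) (fun u => #((partOf F u \ Nbr E u) ∩ R))
    (fun u hu w hw => by have := hdensK (hB u hu).1; have := hR w hw; omega)
    (fun w hw => by have := hdensK (hRK hw); have := hR w hw; omega)
    (fun u hu => card_sdiff_Nbr_le_costC2_add_card_inter hrefl
      ((hB u hu).1.trans (hB u₀ hu₀).1.symm) (hsame u hu))
    (sum_card_sdiff_Nbr_inter_le hsymm B R)
  refine ⟨U, fun v hv => ?_, hUB, hsum⟩
  rcases mem_union.1 (hU hv) with hvB | hvR
  · exact (hB v hvB).1
  · exact hRK hvR

end Partitions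

theorem three_mul_costTopK2_self_le [Fintype V] {γ α : Type*} {E : V → V → Prop}
    {F : V → γ} (hsymm : ∀ u v, E u v → E v u) (hrefl : ∀ u, E u u)
    (hdens : ∀ u, 5 * #(partOf F u \ Nbr E u) ≤ #(partOf F u)) (D : V → α) (k : ℕ) :
    3 * costTopK2 E F F k ≤ 7 * costTopK2 E F D k := by
  refine mul_topSum_le_mul_topSum fun T hT => ?_
  set a : V → ℕ := fun u => #(partOf F u \ Nbr E u)
  set bad := {u ∈ T | costC2 E F D u < a u}
  set good := {u ∈ T | ¬costC2 E F D u < a u}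
  obtain ⟨U, hU, hsumU⟩ := exists_sum_le_of_forall_fiber F bad (fun u => 3 * a u)
      (fun v => 4 * costC2 E F D v) fun c => by
    obtain ⟨U, hUc, hUcard, hsum⟩ := exists_charging_of_costC2_lt hsymm hrefl hdens c
      {u ∈ bad | F u = c} fun u hu => by
        simp only [bad, mem_filter] at hu
        exact ⟨hu.2, hu.1.2⟩
    exact ⟨U, hUc, hUcard, by simpa only [mul_sum] using hsum⟩
  refine ⟨good ∪ U, ?_, ?_⟩
  · have : #bad + #good = #T := card_filter_add_card_filter_not _
    have := card_union_le good U
    omega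
  · have hgood : ∑ u ∈ good, a u ≤ ∑ u ∈ good, costC2 E F D u :=
      sum_le_sum fun u hu => not_lt.1 (mem_filter.1 hu).2
    have hsplit : ∑ u ∈ bad, a u + ∑ u ∈ good, a u = ∑ u ∈ T, a u :=
      sum_filter_add_sum_filter_not _ _ _
    have h1 : ∑ u ∈ good, costC2 E F D u ≤ ∑ u ∈ good ∪ U, costC2 E F D u :=
      sum_le_sum_of_subset subset_union_left
    have h2 : ∑ u ∈ U, costC2 E F D u ≤ ∑ u ∈ good ∪ U, costC2 E F D u :=
      sum_le_sum_of_subset subset_union_right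
    rw [← mul_sum, ← mul_sum] at hsumU
    rw [sum_congr rfl fun u _ => costC2_self hrefl u]
    change 3 * ∑ u ∈ T, a u ≤ _
    omega

section Neighbourhoods

variable [Fintype V] {E : V → V → Prop} {β lam : ℝ} {u v w : V}

def nbrDist (E : V → V → Prop) (u v : V) : ℕ := #(Nbr E u ∆ Nbr E v)

theorem nbrDist_comm (u v : V) : nbrDist E u v = nbrDist E v u := by
  rw [nbrDist, nbrDist, symmDiff_comm]

theorem nbrDist_le_add (u v w : V) : nbrDist E u w ≤ nbrDist E u v + nbrDist E v w :=
  card_symmDiff_le_add _ _ _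

theorem deg_le_deg_add_nbrDist (u v : V) : deg E v ≤ deg E u + nbrDist E u v := by
  rw [nbrDist_comm]
  exact card_le_card_add_card_symmDiff _ _

theorem mem_NH : v ∈ NH β E u ↔ EH β E u v := by simp [NH]

theorem NH_subset_Nbr (u : V) : NH β E u ⊆ Nbr E u := fun _ hv => mem_Nbr.2 (mem_NH.1 hv).1

theorem one_le_deg (hrefl : ∀ u, E u u) (u : V) : 1 ≤ deg E u :=
  card_pos.2 ⟨u, mem_Nbr.2 (hrefl u)⟩

theorem EH_refl (hrefl : ∀ u, E u u) (hβ : 0 ≤ β) (u : V) : EH β E u u :=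
  ⟨hrefl u, by simpa using mul_nonneg hβ (Nat.cast_nonneg (Mdeg E u u))⟩

theorem EH.symm (hsymm : ∀ u v, E u v → E v u) (h : EH β E u v) : EH β E v u :=
  ⟨hsymm _ _ h.1, by rw [symmDiff_comm, Mdeg, max_comm]; exact h.2⟩

theorem EH.one_sub_mul_nbrDist_le (hβ : 0 ≤ β) (h : EH β E u v) :
    (1 - β) * nbrDist E u v ≤ β * deg E u := by
  have hδ : (nbrDist E u v : ℝ) ≤ β * Mdeg E u v := h.2
  have hM : (Mdeg E u v : ℝ) ≤ deg E u + nbrDist E u v := by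
    exact_mod_cast max_le (Nat.le_add_right _ _) (deg_le_deg_add_nbrDist u v)
  nlinarith [mul_le_mul_of_nonneg_left hM hβ]

theorem EH.one_sub_mul_nbrDist_le_of_EH (hβ : 0 ≤ β) (hβ1 : β ≤ 1) {m : V}
    (hmu : EH β E m u) (hmv : EH β E m v) : (1 - β) * nbrDist E u v ≤ 2 * β * deg E m := by
  have htri : (nbrDist E u v : ℝ) ≤ nbrDist E m u + nbrDist E m v := by
    have := nbrDist_le_add (E := E) u m v
    rw [nbrDist_comm u m] at this
    exact_mod_cast this
  nlinarith [hmu.one_sub_mul_nbrDist_le hβ, hmv.one_sub_mul_nbrDist_le hβ,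
    mul_le_mul_of_nonneg_left htri (sub_nonneg.2 hβ1)]

def CommonH (β : ℝ) (E : V → V → Prop) (g h : V) : Prop := ∃ x, EH β E g x ∧ EH β E h x

theorem CommonH.symm {g h : V} (hgh : CommonH β E g h) : CommonH β E h g :=
  let ⟨x, hg, hh⟩ := hgh; ⟨x, hh, hg⟩

theorem CommonH.one_sub_mul_nbrDist_le (hβ : 0 ≤ β) (hβ1 : β ≤ 1) {g h : V}
    (hgh : CommonH β E g h) : (1 - β) * nbrDist E g h ≤ β * (deg E g + deg E h) := by
  obtain ⟨x, hgx, hhx⟩ := hgh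
  have htri : (nbrDist E g h : ℝ) ≤ nbrDist E g x + nbrDist E h x := by
    have := nbrDist_le_add (E := E) g x h
    rw [nbrDist_comm x h] at this
    exact_mod_cast this
  nlinarith [hgx.one_sub_mul_nbrDist_le hβ, hhx.one_sub_mul_nbrDist_le hβ,
    mul_le_mul_of_nonneg_left htri (sub_nonneg.2 hβ1)]

theorem CommonH.one_sub_two_mul_nbrDist_le (hβ : 0 ≤ β) (hβ1 : β ≤ 1) {g h : V}
    (hgh : CommonH β E g h) : (1 - 2 * β) * nbrDist E g h ≤ 2 * β * deg E g := by
  have hdeg : (deg E h : ℝ) ≤ deg E g + nbrDist E g h := by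
    exact_mod_cast deg_le_deg_add_nbrDist g h
  nlinarith [hgh.one_sub_mul_nbrDist_le hβ hβ1, mul_le_mul_of_nonneg_left hdeg hβ]

theorem CommonH.one_sub_two_mul_deg_le (hβ : 0 ≤ β) (hβ2 : 2 * β ≤ 1) {g h : V}
    (hgh : CommonH β E g h) : (1 - 2 * β) * deg E h ≤ deg E g := by
  have hdeg : (deg E h : ℝ) ≤ deg E g + nbrDist E g h := by
    exact_mod_cast deg_le_deg_add_nbrDist g h
  nlinarith [hgh.one_sub_two_mul_nbrDist_le hβ (by linarith),
    mul_le_mul_of_nonneg_left hdeg (by linarith : (0 : ℝ) ≤ 1 - 2 * β)]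

theorem CommonH.nbrDist_le_of_EH (hβ : 0 ≤ β) (hβ2 : 2 * β ≤ 1) {g m : V}
    (hgm : CommonH β E g m) (hmw : EH β E m w) :
    (1 - β) * (1 - 2 * β) * nbrDist E g w ≤ β * (3 - 2 * β) * deg E g := by
  have htri : (nbrDist E g w : ℝ) ≤ nbrDist E g m + nbrDist E m w := by
    exact_mod_cast nbrDist_le_add g m w
  have h1 := hgm.one_sub_two_mul_nbrDist_le hβ (by linarith)
  have h2 := hgm.one_sub_two_mul_deg_le hβ hβ2
  have h3 := hmw.one_sub_mul_nbrDist_le hβ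
  have hp : 0 ≤ (1 - β) * (1 - 2 * β) := mul_nonneg (by linarith) (by linarith)
  nlinarith [mul_le_mul_of_nonneg_left htri hp, mul_le_mul_of_nonneg_left h1
    (by linarith : (0 : ℝ) ≤ 1 - β), mul_le_mul_of_nonneg_left h3
    (by linarith : (0 : ℝ) ≤ 1 - 2 * β), mul_le_mul_of_nonneg_left h2 hβ]

end Neighbourhoods

section Heavy

variable [Fintype V] {E : V → V → Prop} {β lam : ℝ} {u v w : V}

theorem commonH_of_nbrDist_lt {g h : V} (hg : Heavy β lam E g) (hh : Heavy β lam E h)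
    (hlt : (nbrDist E g h : ℝ) < (1 - 2 * lam) * (deg E g + deg E h)) : CommonH β E g h := by
  have hunion : #(NH β E g ∪ NH β E h) ≤ #(Nbr E g ∪ Nbr E h) :=
    card_le_card (union_subset_union (NH_subset_Nbr g) (NH_subset_Nbr h))
  have hsum := card_union_add_card_inter (NH β E g) (NH β E h)
  have h2 := card_add_card_add_card_symmDiff (Nbr E g) (Nbr E h)
  have hpos : (0 : ℝ) < #(NH β E g ∩ NH β E h) := by
    have hunion' : (#(NH β E g ∪ NH β E h) : ℝ) ≤ #(Nbr E g ∪ Nbr E h) := by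
      exact_mod_cast hunion
    have hsum' : (#(NH β E g ∪ NH β E h) + #(NH β E g ∩ NH β E h) : ℝ) =
        dH β E g + dH β E h := by exact_mod_cast hsum
    have h2' : (deg E g + deg E h + nbrDist E g h : ℝ) = 2 * #(Nbr E g ∪ Nbr E h) := by
      exact_mod_cast h2
    unfold Heavy at hg hh
    linarith
  obtain ⟨x, hx⟩ := card_pos.1 (by exact_mod_cast hpos)
  exact ⟨x, mem_NH.1 (mem_inter.1 hx).1, mem_NH.1 (mem_inter.1 hx).2⟩

theorem CommonH.trans_of_heavy (hrefl : ∀ u, E u u) (hβ : 0 ≤ β) (hlam : 0 ≤ lam)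
    (hβlam : 8 * β + lam ≤ 3 / 8) {g m h : V} (hg : Heavy β lam E g) (hh : Heavy β lam E h)
    (hgm : CommonH β E g m) (hmh : CommonH β E m h) : CommonH β E g h := by
  refine commonH_of_nbrDist_lt hg hh ?_
  have htri : (nbrDist E g h : ℝ) ≤ nbrDist E g m + nbrDist E h m := by
    have := nbrDist_le_add (E := E) g m h
    rw [nbrDist_comm m h] at this
    exact_mod_cast this
  have h1 := hgm.one_sub_two_mul_nbrDist_le hβ (by linarith)
  have h2 := hmh.symm.one_sub_two_mul_nbrDist_le hβ (by linarith)
  have hdeg : (2 : ℝ) ≤ deg E g + deg E h := by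
    have := one_le_deg hrefl g; have := one_le_deg hrefl h
    exact_mod_cast (by omega : 2 ≤ deg E g + deg E h)
  nlinarith [mul_le_mul_of_nonneg_left htri (by linarith : (0 : ℝ) ≤ 1 - 2 * β)]

theorem Gtilde_adj (hsymm : ∀ u v, E u v → E v u) (h : (Gtilde β lam E).Adj u v) :
    EH β E u v ∧ (Heavy β lam E u ∨ Heavy β lam E v) := by
  rcases (SimpleGraph.fromRel_adj _ _ _).1 h |>.2 with huv | hvu
  · exact huv
  · exact ⟨hvu.1.symm hsymm, hvu.2.symm⟩

theorem preCluster_eq_iff : preCluster β lam E u = preCluster β lam E v ↔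
    (Gtilde β lam E).Reachable u v :=
  SimpleGraph.ConnectedComponent.eq

theorem preCluster_eq_of_EH_of_heavy {m : V} (hm : Heavy β lam E m) (hmx : EH β E m w) :
    preCluster β lam E w = preCluster β lam E m := by
  rcases eq_or_ne m w with rfl | hne
  · rfl
  exact (preCluster_eq_iff.2 (SimpleGraph.Adj.reachable
    ((SimpleGraph.fromRel_adj _ _ _).2 ⟨hne, Or.inl ⟨hmx, Or.inl hm⟩⟩))).symm

theorem commonH_of_walk (hsymm : ∀ u v, E u v → E v u) (hrefl : ∀ u, E u u) (hβ : 0 ≤ β)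
    (hlam : 0 ≤ lam) (hβlam : 8 * β + lam ≤ 3 / 8) {a b : V}
    (p : (Gtilde β lam E).Walk a b) :
    ∀ {g h : V}, Heavy β lam E g → Heavy β lam E h → EH β E g a → EH β E h b →
      CommonH β E g h := by
  induction p with
  | nil => exact fun _ _ hga hhb => ⟨_, hga, hhb⟩
  | @cons a a' b hadj p ih =>
    intro g h hg hh hga hhb
    obtain ⟨haa', ha | ha'⟩ := Gtilde_adj hsymm hadj
    · exact CommonH.trans_of_heavy hrefl hβ hlam hβlam hg hh ⟨a, hga, EH_refl hrefl hβ a⟩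
        (ih ha hh haa' hhb)
    · exact CommonH.trans_of_heavy hrefl hβ hlam hβlam hg hh ⟨a, hga, haa'.symm hsymm⟩
        (ih ha' hh (EH_refl hrefl hβ a') hhb)

theorem commonH_of_preCluster_eq (hsymm : ∀ u v, E u v → E v u) (hrefl : ∀ u, E u u)
    (hβ : 0 ≤ β) (hlam : 0 ≤ lam) (hβlam : 8 * β + lam ≤ 3 / 8) {g h : V}
    (hg : Heavy β lam E g) (hh : Heavy β lam E h)
    (hgh : preCluster β lam E g = preCluster β lam E h) : CommonH β E g h :=
  let ⟨p⟩ := preCluster_eq_iff.1 hgh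
  commonH_of_walk hsymm hrefl hβ hlam hβlam p hg hh (EH_refl hrefl hβ g) (EH_refl hrefl hβ h)

theorem exists_heavy_EH_of_preCluster_eq (hsymm : ∀ u v, E u v → E v u)
    (hrefl : ∀ u, E u u) (hβ : 0 ≤ β) (hne : u ≠ v)
    (huv : preCluster β lam E u = preCluster β lam E v) :
    ∃ m, Heavy β lam E m ∧ EH β E u m ∧ preCluster β lam E m = preCluster β lam E u := by
  obtain ⟨p⟩ := preCluster_eq_iff.1 huv
  cases p with
  | nil => exact absurd rfl hne
  | @cons _ x _ hadj _ =>
    obtain ⟨hux, hu | hx⟩ := Gtilde_adj hsymm hadj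
    · exact ⟨u, hu, EH_refl hrefl hβ u, rfl⟩
    · exact ⟨x, hx, hux, (preCluster_eq_iff.2 hadj.reachable).symm⟩

theorem nbrDist_le_of_heavy_of_preCluster_eq (hsymm : ∀ u v, E u v → E v u)
    (hrefl : ∀ u, E u u) (hβ : 0 ≤ β) (hlam : 0 ≤ lam) (hβlam : 8 * β + lam ≤ 3 / 8)
    {m₀ : V} (hm₀ : Heavy β lam E m₀) (hne : w ≠ v)
    (hwv : preCluster β lam E w = preCluster β lam E v)
    (hm₀v : preCluster β lam E m₀ = preCluster β lam E v) :
    (1 - β) * (1 - 2 * β) * nbrDist E m₀ w ≤ β * (3 - 2 * β) * deg E m₀ := by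
  obtain ⟨m, hm, hwm, hmw⟩ := exists_heavy_EH_of_preCluster_eq hsymm hrefl hβ hne hwv
  exact (commonH_of_preCluster_eq hsymm hrefl hβ hlam hβlam hm₀ hm
    (hm₀v.trans (hwv.symm.trans hmw.symm))).nbrDist_le_of_EH hβ (by linarith) (hwm.symm hsymm)

end Heavy

section Density

variable [Fintype V] {E : V → V → Prop} {β lam : ℝ} {u : V}

theorem div_add_five_mul_div_lt_one_sub (hβ : 0 ≤ β) (hlam : 0 ≤ lam)
    (hβlam : 8 * β + lam ≤ 3 / 8) :
    β * (3 - 2 * β) / ((1 - β) * (1 - 2 * β)) + 5 * (2 * β / (1 - β)) < 1 - lam := by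
  have h1 : 0 < 1 - β := by linarith
  have h2 : 0 < 1 - 2 * β := by linarith
  have hsum : β * (3 - 2 * β) / ((1 - β) * (1 - 2 * β)) + 5 * (2 * β / (1 - β)) =
      (β * (3 - 2 * β) + 10 * β * (1 - 2 * β)) / ((1 - β) * (1 - 2 * β)) := by
    rw [eq_div_iff (by positivity), add_mul, div_mul_cancel₀ _ (by positivity)]
    field_simp
    ring
  rw [hsum, div_lt_iff₀ (by positivity)]
  nlinarith [mul_nonneg hβ hβ, mul_nonneg (mul_nonneg hβ hβ) hβ, mul_nonneg hβ hlam,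
    mul_nonneg (mul_nonneg hβ hβ) hlam]

theorem NH_subset_partOf_preCluster {m : V} (hm : Heavy β lam E m) :
    NH β E m ⊆ partOf (preCluster β lam E) m := fun _ hx =>
  mem_partOf.2 (preCluster_eq_of_EH_of_heavy hm (mem_NH.1 hx))

theorem mul_deg_le_card_NH_inter_Nbr (hsymm : ∀ u v, E u v → E v u) (hrefl : ∀ u, E u u)
    (hβ : 0 ≤ β) (hlam : 0 ≤ lam) (hβlam : 8 * β + lam ≤ 3 / 8) {m₀ v w : V}
    (hm₀ : Heavy β lam E m₀) (hne : w ≠ v) (hwv : preCluster β lam E w = preCluster β lam E v)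
    (hm₀v : preCluster β lam E m₀ = preCluster β lam E v) :
    (1 - lam - β * (3 - 2 * β) / ((1 - β) * (1 - 2 * β))) * deg E m₀ ≤
      #(NH β E m₀ ∩ Nbr E w) := by
  have hδ : (nbrDist E m₀ w : ℝ) ≤ β * (3 - 2 * β) / ((1 - β) * (1 - 2 * β)) * deg E m₀ := by
    rw [div_mul_eq_mul_div, le_div_iff₀ (by nlinarith), mul_comm]
    exact nbrDist_le_of_heavy_of_preCluster_eq hsymm hrefl hβ hlam hβlam hm₀ hne hwv hm₀v
  have hcount : (#(NH β E m₀) : ℝ) ≤ #(NH β E m₀ ∩ Nbr E w) + nbrDist E m₀ w := by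
    exact_mod_cast card_le_card_inter_add_card_symmDiff (NH_subset_Nbr m₀) (Nbr E w)
  have hS : (1 - lam) * deg E m₀ ≤ (#(NH β E m₀) : ℝ) := hm₀
  linarith

theorem card_inter_Nbr_le_of_EH (hβ : 0 ≤ β) (hβ1 : β < 1) {A : Finset V} {m y : V}
    (hA : Disjoint A (Nbr E u)) (hmy : EH β E m y) (hmu : EH β E m u) :
    (#(A ∩ Nbr E y) : ℝ) ≤ 2 * β / (1 - β) * deg E m := by
  rw [div_mul_eq_mul_div, le_div_iff₀ (by linarith), mul_comm]
  calc (1 - β) * #(A ∩ Nbr E y) ≤ (1 - β) * nbrDist E y u :=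
        mul_le_mul_of_nonneg_left (by exact_mod_cast card_inter_le_card_symmDiff hA _)
          (by linarith)
    _ ≤ 2 * β * deg E m := hmy.one_sub_mul_nbrDist_le_of_EH hβ hβ1.le hmu

theorem five_mul_card_sdiff_Nbr_le (hsymm : ∀ u v, E u v → E v u) (hrefl : ∀ u, E u u)
    (hβ : 0 ≤ β) (hlam : 0 ≤ lam) (hβlam : 8 * β + lam ≤ 3 / 8) (u : V) :
    5 * #(partOf (preCluster β lam E) u \ Nbr E u) ≤ #(partOf (preCluster β lam E) u) := by
  set F := preCluster β lam E
  set A := partOf F u \ Nbr E u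
  have hA : ∀ {w}, w ∈ A → F w = F u ∧ w ≠ u := fun hw => by
    obtain ⟨hwF, hwN⟩ := mem_sdiff.1 hw
    exact ⟨mem_partOf.1 hwF, fun h => hwN (by rw [h]; exact mem_Nbr.2 (hrefl u))⟩
  rcases A.eq_empty_or_nonempty with hAe | ⟨v, hv⟩
  · simp [hAe]
  obtain ⟨m₀, hm₀, hum₀, hFm₀⟩ :=
    exists_heavy_EH_of_preCluster_eq hsymm hrefl hβ (hA hv).2.symm (hA hv).1.symm
  set S := NH β E m₀
  set μ := (1 - lam - β * (3 - 2 * β) / ((1 - β) * (1 - 2 * β))) * deg E m₀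
  have hnum := div_add_five_mul_div_lt_one_sub hβ hlam hβlam
  have hd : (1 : ℝ) ≤ deg E m₀ := Nat.one_le_cast.2 (one_le_deg hrefl m₀)
  have hc₂ : 0 ≤ 2 * β / (1 - β) := div_nonneg (by linarith) (by linarith)
  -- every `w ∈ A` sees most of `S`, and every `y ∈ S` sees few of `A`
  have hlow : ∀ w ∈ A, μ ≤ #(S.bipartiteAbove E w) := fun w hw => by
    rw [show S.bipartiteAbove E w = S ∩ Nbr E w by ext; simp [bipartiteAbove, mem_Nbr]]
    exact mul_deg_le_card_NH_inter_Nbr hsymm hrefl hβ hlam hβlam hm₀ (hA hw).2 (hA hw).1 hFm₀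
  have hup : ∀ y ∈ S, (#(A.bipartiteBelow E y) : ℝ) ≤ μ / 5 := fun y hy => by
    have hsub : A.bipartiteBelow E y ⊆ A ∩ Nbr E y := fun w hw => by
      obtain ⟨hwA, hwy⟩ := (mem_bipartiteBelow E).1 hw
      exact mem_inter.2 ⟨hwA, mem_Nbr.2 (hsymm _ _ hwy)⟩
    have := card_inter_Nbr_le_of_EH (A := A) hβ (by linarith) sdiff_disjoint (mem_NH.1 hy)
      (hum₀.symm hsymm)
    have : (#(A.bipartiteBelow E y) : ℝ) ≤ #(A ∩ Nbr E y) := by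
      exact_mod_cast card_le_card hsub
    nlinarith
  have hdc := card_nsmul_le_card_nsmul (R := ℝ) E hlow hup
  simp only [nsmul_eq_mul] at hdc
  have hpos : 0 < μ := mul_pos (by linarith) (by linarith)
  have h5 : (5 * #A : ℝ) ≤ #S := by nlinarith
  have hSK : #S ≤ #(partOf F u) := by
    have hF : F m₀ = F u := hFm₀
    rw [show partOf F u = partOf F m₀ by simp only [partOf, hF]]
    exact card_le_card (NH_subset_partOf_preCluster hm₀)
  exact (Nat.cast_le.1 (by exact_mod_cast h5) : 5 * #A ≤ #S).trans hSK

end Density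

theorem preCluster_seven_approx_G2_general [Fintype V] (E : V → V → Prop)
    (hsymm : ∀ u v, E u v → E v u) (hrefl : ∀ u, E u u)
    (β lam : ℝ) (hβ0 : 0 < β) (hlam0 : 0 < lam)
    (hβlam : 8 * β + lam ≤ 3 / 8)
    (k : ℕ)
    (Cstar : V → ℕ) :
    costTopK2 E (preCluster β lam E) (preCluster β lam E) k
      ≤ 7 * costTopK2 E (preCluster β lam E) Cstar k := by
  have := three_mul_costTopK2_self_le hsymm hrefl
    (five_mul_card_sdiff_Nbr_le hsymm hrefl hβ0.le hlam0.le hβlam) Cstar k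
  omega

/-- Let `F` be the pre-clustering (connected components of `G̃`) and
`G₂` the instance obtained from `G` by neutralising every `+`edge cut by `F`. If `𝒞*`
minimises `cost^k_·(G₂)` over all clusterings, then `cost^k_F(G₂) ≤ 7·cost^k_{𝒞*}(G₂)`. -/
theorem preCluster_seven_approx_G2 [Fintype V] (E : V → V → Prop)
    (hsymm : ∀ u v, E u v → E v u) (hrefl : ∀ u, E u u)
    (β lam : ℝ) (hβ0 : 0 < β) (hβ1 : β < 1) (hlam0 : 0 < lam) (hlam1 : lam < 1)
    (hβlam : 8 * β + lam ≤ 3 / 8)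
    (k : ℕ) (hk1 : 1 ≤ k) (hk2 : k ≤ Fintype.card V)
    (Cstar : V → ℕ)
    (hopt : ∀ D : V → ℕ,
      costTopK2 E (preCluster β lam E) Cstar k ≤ costTopK2 E (preCluster β lam E) D k) :
    costTopK2 E (preCluster β lam E) (preCluster β lam E) k
      ≤ 7 * costTopK2 E (preCluster β lam E) Cstar k :=
  preCluster_seven_approx_G2_general E hsymm hrefl β lam hβ0 hlam0 hβlam k Cstar

end
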